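/- Every simple H₃∨△-algebra (an algebra with more than one element whose only modal deductive systems are {1} and the whole algebra) is isomorphic either to C₃^{→,∨} or to its two-element subalgebra C₂^{→,∨} on {0,1}; thus these are the unique simple H₃∨△-algebras up to isomorphism. -/
import Mathlib


class H3vD (A : Type*) extends One A where
  imp : A → A → A
  sup : A → A → A
  box : A → A
  h1 : ∀ x y : A, imp x (imp y x) = 1
  h2 : ∀ x y z : A, imp (imp x (imp y z)) (imp (imp x y) (imp x z)) = 1
  h3 : ∀ x y : A, imp x y = 1 → imp y x = 1 → x = y
  it3 : ∀ x y z : A, imp (imp (imp x y) z) (imp (imp (imp z x) z) z) = 1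
  m1 : ∀ x : A, imp (box x) x = 1
  m2 : ∀ x y : A, imp (imp (imp y (box y)) (imp x (box (box x)))) (box (imp x y)) = imp (box x) (box (box y))
  m3 : ∀ x y : A, imp (imp (box x) (box y)) (box x) = box x
  sup_assoc : ∀ x y z : A, sup x (sup y z) = sup (sup x y) z
  sup_comm : ∀ x y : A, sup x y = sup y x
  sup_idem : ∀ x : A, sup x x = x
  sup_one : ∀ x : A, sup x 1 = 1
  sup_ax1 : ∀ x y : A, imp x (sup x y) = 1
  sup_ax2 : ∀ x y : A, imp (imp x y) (imp (sup x y) y) = 1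
  box_inf : ∀ x y m : A,
    (imp m x = 1 ∧ imp m y = 1 ∧ ∀ z : A, imp z x = 1 → imp z y = 1 → imp z m = 1) →
    (imp (box m) (box x) = 1 ∧ imp (box m) (box y) = 1 ∧
      ∀ z : A, imp z (box x) = 1 → imp z (box y) = 1 → imp z (box m) = 1)

inductive C3 : Type
  | zero
  | half
  | one
  deriving DecidableEq

namespace C3

def imp : C3 → C3 → C3
  | zero, _ => one
  | half, zero => zero
  | half, _ => one
  | one, y => y

def inf : C3 → C3 → C3
  | zero, _ => zero
  | half, zero => zero
  | half, _ => half
  | one, y => y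

def sup : C3 → C3 → C3
  | zero, y => y
  | half, one => one
  | half, _ => half
  | one, _ => one

def box : C3 → C3
  | one => one
  | _ => zero

end C3

inductive C2 : Type
  | zero
  | one
  deriving DecidableEq

namespace C2

def imp : C2 → C2 → C2
  | zero, _ => one
  | one, y => y

def inf : C2 → C2 → C2
  | zero, _ => zero
  | one, y => y

def sup : C2 → C2 → C2
  | zero, y => y
  | one, _ => one

def box : C2 → C2 := id

end C2

/-- A modal deductive system. -/
def isMDS {A : Type*} [H3vD A] (D : Set A) : Prop :=
  (1 : A) ∈ D ∧ (∀ x y : A, x ∈ D → H3vD.imp x y ∈ D → y ∈ D) ∧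
    (∀ x : A, x ∈ D → H3vD.box x ∈ D)

section Helpers

variable {A : Type*} [H3vD A]

open H3vD

private lemma mp1 {a b : A} (ha : a = 1) (h : H3vD.imp a b = 1) : b = 1 := by
  subst ha
  refine h3 b 1 ?_ h
  have h1' := h1 b (1 : A)
  rwa [h] at h1'

private lemma imp_one' (x : A) : H3vD.imp x 1 = 1 := mp1 rfl (h1 1 x)

private lemma imp_self' (x : A) : H3vD.imp x x = 1 := by
  have h := h2 x 1 x
  rw [h1 x 1, imp_one' x] at h
  exact mp1 rfl (mp1 rfl h)

private lemma one_imp (x : A) : H3vD.imp 1 x = x := by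
  refine h3 (H3vD.imp 1 x) x ?_ (h1 x 1)
  have h := h2 (H3vD.imp 1 x) 1 x
  rw [imp_self' (H3vD.imp 1 x), imp_one' (H3vD.imp 1 x)] at h
  exact mp1 rfl (mp1 rfl h)

private lemma mono_box {x y : A} (h : H3vD.imp x y = 1) :
    H3vD.imp (H3vD.box x) (H3vD.box y) = 1 :=
  (box_inf x y x ⟨imp_self' x, h, fun _ hz _ => hz⟩).2.1

private lemma box_one : H3vD.box (1 : A) = 1 := by
  set t := H3vD.box (1 : A) with ht
  have hα := m2 (1 : A) (1 : A)
  rw [one_imp, one_imp, one_imp, ← ht] at hα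
  -- hα : imp (imp t (box t)) t = imp t (box t)
  have hβ := m3 (1 : A) t
  rw [← ht] at hβ
  -- hβ : imp (imp t (box t)) t = t
  rw [hα] at hβ
  -- hβ : imp t (box t) = t
  have hγ := m2 (1 : A) t
  rw [one_imp, one_imp, ← ht] at hγ
  rw [hβ, hβ, hβ] at hγ
  -- hγ : t = imp t (box (box t))
  have hδ := m2 t (1 : A)
  rw [one_imp, imp_one', ← ht, ← hγ, imp_self', one_imp, imp_self'] at hδ
  exact hδ

private lemma box_box (x : A) : H3vD.box (H3vD.box x) = H3vD.box x := by
  have h := m2 x x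
  rw [imp_self' x, box_one, imp_one'] at h
  exact h3 _ _ (m1 (H3vD.box x)) h.symm

private lemma mds_box (a : A) : isMDS {z : A | H3vD.imp (H3vD.box a) z = 1} := by
  refine ⟨imp_one' _, ?_, ?_⟩
  · intro x y hx hxy
    have hx' : H3vD.imp (H3vD.box a) x = 1 := hx
    have hxy' : H3vD.imp (H3vD.box a) (H3vD.imp x y) = 1 := hxy
    have h := h2 (H3vD.box a) x y
    rw [hxy', one_imp, hx', one_imp] at h
    exact h
  · intro x hx
    have hx' : H3vD.imp (H3vD.box a) x = 1 := hx
    have h := mono_box hx'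
    have : H3vD.imp (H3vD.box a) (H3vD.box x) = 1 := by rwa [box_box] at h
    exact this

end Helpers

/-- Every simple H₃∨△-algebra (more than one element, and whose only modal
deductive systems are `{1}` and the whole algebra) is isomorphic to `C₃^{→,∨}`
or to its two-element subalgebra `C₂^{→,∨}`. -/
theorem stmt14 {A : Type*} [H3vD A] (hnt : ∃ x y : A, x ≠ y)
    (hsimple : ∀ D : Set A, isMDS D → D = {(1 : A)} ∨ D = Set.univ) :
    (∃ f : A → C3, Function.Bijective f ∧
      (∀ x y : A, f (H3vD.imp x y) = C3.imp (f x) (f y)) ∧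
      (∀ x y : A, f (H3vD.sup x y) = C3.sup (f x) (f y)) ∧
      (∀ x : A, f (H3vD.box x) = C3.box (f x)) ∧ f 1 = C3.one) ∨
    (∃ f : A → C2, Function.Bijective f ∧
      (∀ x y : A, f (H3vD.imp x y) = C2.imp (f x) (f y)) ∧
      (∀ x y : A, f (H3vD.sup x y) = C2.sup (f x) (f y)) ∧
      (∀ x : A, f (H3vD.box x) = C2.box (f x)) ∧ f 1 = C2.one) := by
  classical
  open H3vD in
  obtain ⟨x0, y0, hxy⟩ := hnt
  have hA : ∃ a : A, a ≠ 1 := by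
    by_cases h : x0 = 1
    · refine ⟨y0, fun hy => hxy ?_⟩; rw [h, hy]
    · exact ⟨x0, h⟩
  obtain ⟨a, ha⟩ := hA
  have hbot_of : ∀ c : A, c ≠ 1 → ∀ z : A, H3vD.imp (H3vD.box c) z = 1 := by
    intro c hc z
    rcases hsimple _ (mds_box c) with h | h
    · exfalso
      have hmem : c ∈ {z : A | H3vD.imp (H3vD.box c) z = 1} := m1 c
      rw [h] at hmem
      exact hc hmem
    · have hmem : z ∈ {z : A | H3vD.imp (H3vD.box c) z = 1} := by
        rw [h]; exact Set.mem_univ z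
      exact hmem
  set O := H3vD.box a with hO
  have hbot : ∀ z : A, H3vD.imp O z = 1 := hbot_of a ha
  have hO1 : O ≠ 1 := by
    intro h
    apply hxy
    have hz : ∀ z : A, z = 1 := fun z => by
      have hb := hbot z; rwa [h, one_imp] at hb
    rw [hz x0, hz y0]
  have hboxeq : ∀ z : A, z ≠ 1 → H3vD.box z = O := fun z hz =>
    h3 _ _ (hbot_of z hz O) (hbot (H3vD.box z))
  have hboxO : H3vD.box O = O := hboxeq O hO1
  -- negation: for z ≠ O, imp z O = O
  have hneg : ∀ z : A, z ≠ O → H3vD.imp z O = O := by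
    intro z hzO
    by_cases hz1 : z = 1
    · rw [hz1, one_imp]
    · have h := m2 z O
      simp only [box_box] at h
      rw [hboxO, hboxeq z hz1, imp_self', one_imp] at h
      -- h : imp (imp z O) (box (imp z O)) = 1
      have heq := h3 _ _ h (m1 (H3vD.imp z O))
      by_cases hc : H3vD.imp z O = 1
      · exact absurd (h3 z O hc (hbot z)) hzO
      · rw [heq, hboxeq _ hc]
  -- any two "middle" elements are comparable, hence equal
  have hmid : ∀ u v : A, u ≠ O → u ≠ 1 → v ≠ O → v ≠ 1 → H3vD.imp u v = 1 := by
    intro u v huO hu1 hvO hv1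
    have h := m2 u v
    simp only [box_box] at h
    rw [hboxeq u hu1, hboxeq v hv1, hneg u huO, hneg v hvO, imp_self', one_imp] at h
    -- h : box (imp u v) = 1
    by_contra hne
    exact hO1 ((hboxeq _ hne).symm.trans h)
  have hsupO : ∀ z : A, H3vD.sup O z = z := by
    intro z
    refine h3 _ _ ?_ ?_
    · have h := sup_ax2 O z
      rwa [hbot z, one_imp] at h
    · rw [H3vD.sup_comm]; exact sup_ax1 z O
  have hsup1 : ∀ z : A, H3vD.sup 1 z = 1 := fun z => (H3vD.sup_comm 1 z).trans (sup_one z)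
  by_cases hm : ∃ m : A, m ≠ O ∧ m ≠ 1
  · -- three-element case
    obtain ⟨m, hmO, hm1⟩ := hm
    left
    have htri : ∀ z : A, z = O ∨ z = m ∨ z = 1 := by
      intro z
      by_cases h1' : z = 1
      · exact Or.inr (Or.inr h1')
      by_cases hO' : z = O
      · exact Or.inl hO'
      exact Or.inr (Or.inl (h3 z m (hmid z m hO' h1' hmO hm1) (hmid m z hmO hm1 hO' h1')))
    have timpO : H3vD.imp m O = O := hneg m hmO
    have tboxm : H3vD.box m = O := hboxeq m hm1
    have tsupmO : H3vD.sup m O = m := (H3vD.sup_comm m O).trans (hsupO m)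
    have tsupmm : H3vD.sup m m = m := H3vD.sup_idem m
    refine ⟨fun z => if z = 1 then C3.one else if z = O then C3.zero else C3.half,
      ?_, ?_, ?_, ?_, ?_⟩
    · constructor
      · intro z w hzw
        rcases htri z with rfl | rfl | rfl <;> rcases htri w with rfl | rfl | rfl <;>
          first
            | rfl
            | exact absurd hzw (by simp [hO1, hm1, hmO])
      · intro c
        rcases c with _ | _ | _
        · exact ⟨O, by simp [hO1]⟩
        · exact ⟨m, by simp [hm1, hmO]⟩
        · exact ⟨1, by simp⟩
    · intro x y
      rcases htri x with rfl | rfl | rfl <;> rcases htri y with rfl | rfl | rfl <;>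
        simp [hbot, one_imp, imp_self', imp_one', timpO, hO1, hm1, hmO, C3.imp]
    · intro x y
      rcases htri x with rfl | rfl | rfl <;> rcases htri y with rfl | rfl | rfl <;>
        simp [hsupO, hsup1, H3vD.sup_one, tsupmO, tsupmm, hO1, hm1, hmO, C3.sup]
    · intro x
      rcases htri x with rfl | rfl | rfl <;>
        simp [hboxO, tboxm, box_one, hO1, hm1, hmO, C3.box]
    · simp
  · -- two-element case
    right
    push_neg at hm
    have htwo : ∀ z : A, z = O ∨ z = 1 := by
      intro z
      by_cases hO' : z = O
      · exact Or.inl hO'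
      · exact Or.inr (hm z hO')
    refine ⟨fun z => if z = 1 then C2.one else C2.zero, ?_, ?_, ?_, ?_, ?_⟩
    · constructor
      · intro z w hzw
        rcases htwo z with rfl | rfl <;> rcases htwo w with rfl | rfl <;>
          first
            | rfl
            | exact absurd hzw (by simp [hO1])
      · intro c
        rcases c with _ | _
        · exact ⟨O, by simp [hO1]⟩
        · exact ⟨1, by simp⟩
    · intro x y
      rcases htwo x with rfl | rfl <;> rcases htwo y with rfl | rfl <;>
        simp [hbot, one_imp, imp_self', imp_one', hO1, C2.imp]
    · intro x y
      rcases htwo x with rfl | rfl <;> rcases htwo y with rfl | rfl <;>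
        simp [hsupO, hsup1, H3vD.sup_one, hO1, C2.sup]
    · intro x
      rcases htwo x with rfl | rfl <;> simp [hboxO, box_one, hO1, C2.box]
    · simp
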